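/- arXiv:1701.01425 — 5 statements merged into one kernel-verified Lean document; each statement's English description precedes it below -/
import Mathlib

section
/- Let P ∈ ℂ[x] be a polynomial of degree d ≥ 1. Then the sum over all c ∈ ℂ of the quantity (d minus the number of distinct roots of P - c) equals d - 1. Equivalently, if y_1, …, y_n are the distinct critical values of P and k_i is the number of distinct roots of P - y_i, then k_1 + ⋯ + k_n = (n-1)·d + 1. -/
/-!
A root of `P - c` of multiplicity `k` is a root of `P'` of multiplicity `k - 1`. Hence the defect
`d - #{x | P x = c}` is the number of roots of `P'`, with multiplicity, lying over `c`. Summing over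
all `c` counts every root of `P'` exactly once, giving `deg P' = d - 1`.
-/

open Polynomial

theorem Finset.finsum_sum_filter_eq {α β M : Type*} [DecidableEq β] [AddCommMonoid M]
    (s : Finset α) (g : α → β) (f : α → M) :
    ∑ᶠ b, ∑ x ∈ s with g x = b, f x = ∑ x ∈ s, f x := by
  have hsupp : (Function.support fun b => ∑ x ∈ s with g x = b, f x) ⊆ ↑(s.image g) := by
    intro b hb
    obtain ⟨x, hx, -⟩ := Finset.exists_ne_zero_of_sum_ne_zero hb
    obtain ⟨hxs, rfl⟩ := Finset.mem_filter.mp hx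
    exact Finset.mem_image_of_mem g hxs
  rw [finsum_eq_sum_of_support_subset _ hsupp]
  exact Finset.sum_fiberwise_of_maps_to (fun x hx => Finset.mem_image_of_mem g hx) f

namespace Polynomial

section CommRing

variable {R : Type*} [CommRing R] [IsDomain R] [DecidableEq R]

theorem sum_rootMultiplicity_roots_toFinset (p : R[X]) :
    ∑ x ∈ p.roots.toFinset, p.rootMultiplicity x = Multiset.card p.roots := by
  simp only [← count_roots]
  exact Multiset.toFinset_sum_count_eq _

theorem card_roots_sub_card_roots_toFinset (p : R[X]) :
    Multiset.card p.roots - p.roots.toFinset.card =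
      ∑ x ∈ p.roots.toFinset, (p.rootMultiplicity x - 1) := by
  have hpos : ∀ x ∈ p.roots.toFinset, 1 ≤ p.rootMultiplicity x := fun x hx => by
    rw [← count_roots]
    exact Multiset.one_le_count_iff_mem.mpr (Multiset.mem_toFinset.mp hx)
  rw [Finset.sum_tsub_distrib _ hpos, sum_rootMultiplicity_roots_toFinset, Finset.card_eq_sum_ones]

theorem sum_roots_toFinset_eq_sum_roots_derivative_filter (p : R[X]) (f : R → ℕ)
    (hf : ∀ x, x ∉ (derivative p).roots → f x = 0) :
    ∑ x ∈ p.roots.toFinset, f x = ∑ x ∈ (derivative p).roots.toFinset with p.IsRoot x, f x := by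
  refine (Finset.sum_subset (fun x hx => ?_) (fun x hx hx' => hf x fun hx'' => hx' ?_)).symm
  · obtain ⟨hx', hroot⟩ := Finset.mem_filter.mp hx
    have hp : p ≠ 0 := fun hp => by simp [hp] at hx'
    exact Multiset.mem_toFinset.mpr ((mem_roots hp).mpr hroot)
  · have hp : p ≠ 0 := fun hp => by simp [hp] at hx
    exact Finset.mem_filter.mpr ⟨Multiset.mem_toFinset.mpr hx'',
      (mem_roots hp).mp (Multiset.mem_toFinset.mp hx)⟩

end CommRing

section IsAlgClosed

variable {K : Type*} [Field K] [IsAlgClosed K] [CharZero K] [DecidableEq K]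

theorem natDegree_sub_card_roots_toFinset (p : K[X]) :
    p.natDegree - p.roots.toFinset.card =
      ∑ x ∈ (derivative p).roots.toFinset with p.IsRoot x, (derivative p).rootMultiplicity x := by
  rw [← IsAlgClosed.card_roots_eq_natDegree, card_roots_sub_card_roots_toFinset,
    ← sum_roots_toFinset_eq_sum_roots_derivative_filter p _ fun x hx => by
      rwa [← count_roots, Multiset.count_eq_zero]]
  refine Finset.sum_congr rfl fun x hx => ?_
  have hp : p ≠ 0 := fun hp => by simp [hp] at hx
  exact (derivative_rootMultiplicity_of_root
    ((mem_roots hp).mp (Multiset.mem_toFinset.mp hx))).symm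

theorem natDegree_sub_card_roots_sub_C_toFinset (p : K[X]) (c : K) :
    p.natDegree - (p - C c).roots.toFinset.card =
      ∑ x ∈ (derivative p).roots.toFinset with p.eval x = c,
        (derivative p).rootMultiplicity x := by
  simpa [natDegree_sub_C, sub_eq_zero] using natDegree_sub_card_roots_toFinset (p - C c)

end IsAlgClosed

end Polynomial

theorem riemann_hurwitz_for_polynomials_general (P : ℂ[X]) :
    ∑ᶠ c : ℂ, (P.natDegree - ((P - C c).roots.toFinset.card)) = P.natDegree - 1 := by
  classical
  calc ∑ᶠ c : ℂ, (P.natDegree - (P - C c).roots.toFinset.card)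
      = ∑ᶠ c : ℂ, ∑ x ∈ (derivative P).roots.toFinset with P.eval x = c,
          (derivative P).rootMultiplicity x :=
        finsum_congr (natDegree_sub_card_roots_sub_C_toFinset P)
    _ = ∑ x ∈ (derivative P).roots.toFinset, (derivative P).rootMultiplicity x :=
        Finset.finsum_sum_filter_eq _ _ _
    _ = P.natDegree - 1 := by
        rw [sum_rootMultiplicity_roots_toFinset, IsAlgClosed.card_roots_eq_natDegree,
          natDegree_derivative]

theorem riemann_hurwitz_for_polynomials (P : ℂ[X]) (h : 1 ≤ P.natDegree) :
    ∑ᶠ c : ℂ, (P.natDegree - ((P - C c).roots.toFinset.card)) = P.natDegree - 1 :=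
  riemann_hurwitz_for_polynomials_general P
end

section
/- Let k ≥ 1 and r̄ ≥ 1 be integers. The map π(x,y,z) = (x^k, y, x·z) sends the surface {x^{k·r̄}·y = z^k - 1} ⊆ ℂ³ into the surface {u·(1 + u^{r̄}·v) = w^k} ⊆ ℂ³, and this map is surjective onto the latter surface. -/
theorem quotient_map_onto (k rb : ℕ) (hk : 1 ≤ k) (hrb : 1 ≤ rb) :
    (∀ x y z : ℂ, x ^ (k * rb) * y = z ^ k - 1 →
      (x ^ k) * (1 + (x ^ k) ^ rb * y) = (x * z) ^ k) ∧
    (∀ u v w : ℂ, u * (1 + u ^ rb * v) = w ^ k →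
      ∃ x y z : ℂ, x ^ (k * rb) * y = z ^ k - 1 ∧ (x ^ k, y, x * z) = (u, v, w)) := by
  constructor
  · intro x y z h
    have : (x ^ k) ^ rb * y = z ^ k - 1 := by rw [← pow_mul]; exact h
    rw [this]; ring
  · intro u v w h
    by_cases hu : u = 0
    · subst hu
      have hw : w = 0 := by
        have : w ^ k = 0 := by rw [← h]; ring
        exact pow_eq_zero_iff (by omega) |>.mp this
      exact ⟨0, v, 1, by simp [zero_pow (by positivity : k * rb ≠ 0)],
        by simp [hw, zero_pow (by omega : k ≠ 0)]⟩
    · obtain ⟨x, hx⟩ := Complex.isAlgClosed.exists_pow_nat_eq u (by omega : 0 < k)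
      have hx0 : x ≠ 0 := fun h0 => hu (by simp [h0, zero_pow (by omega : k ≠ 0)] at hx; exact hx.symm)
      refine ⟨x, v, w / x, ?_, by rw [hx]; field_simp⟩
      have : (w / x) ^ k = w ^ k / u := by rw [div_pow, hx]
      rw [this, ← h, pow_mul, hx]
      field_simp
      ring
end

section
/- Let k, r ≥ 2 be integers, α ∈ {0,1}, with k dividing r in case α = 0, and let m = (1-α)·r/k. Suppose R_0, R_1, R_2 ∈ ℂ[t] satisfy the polynomial identity t·(1-t)^m·R_0(t)·R_2(t)^r = 1 - (1-t)^α·R_1(t)^k. Then for any λ ∈ ℂ* and any point (x,y,z) ∈ ℂ³ with x^r·y = z^k - 1, the point (λ·x·z^{1-α}·R_2(1-z^k), λ^{-r}·y·R_0(1-z^k), z^α·R_1(1-z^k)) also satisfies the equation X^r·Y = Z^k - 1. -/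
/-!
Put `t = 1 - z ^ k`, so that `1 - t = z ^ k` and, on the surface, `x ^ r * y = -t`.
The map then multiplies `x ^ r * y` by `z ^ ((1 - α) * r) * R₀(t) * R₂(t) ^ r`, and since
`(1 - α) * r = k * m`, evaluating the polynomial identity at `t` turns `-t * (z ^ k) ^ m * R₀(t) * R₂(t) ^ r`
into `(z ^ α * R₁(t)) ^ k - 1`. The scaling by `λ` cancels in `X ^ r * Y`.
-/

open Polynomial

theorem pow_mul_zpow_neg_mul_eq {G : Type*} [CommGroupWithZero G] {lam : G} (hlam : lam ≠ 0)
    (a b : G) (r : ℕ) : (lam * a) ^ r * (lam ^ (-(r : ℤ)) * b) = a ^ r * b := by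
  rw [zpow_neg, zpow_natCast, mul_pow]
  field_simp

theorem surface_map_of_polynomial_identity {R : Type*} [CommRing R] {k r m n α : ℕ}
    {R₀ R₁ R₂ : R[X]} (hrel : X * (1 - X) ^ m * R₀ * R₂ ^ r = 1 - (1 - X) ^ α * R₁ ^ k)
    (hmn : k * m = n * r) {x y z : R} (h : x ^ r * y = z ^ k - 1) :
    (x * z ^ n * R₂.eval (1 - z ^ k)) ^ r * (y * R₀.eval (1 - z ^ k)) =
      (z ^ α * R₁.eval (1 - z ^ k)) ^ k - 1 := by
  have heval := congrArg (eval (1 - z ^ k)) hrel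
  simp only [eval_mul, eval_pow, eval_sub, eval_one, eval_X, sub_sub_cancel] at heval
  calc (x * z ^ n * R₂.eval (1 - z ^ k)) ^ r * (y * R₀.eval (1 - z ^ k))
      = (x ^ r * y) * (z ^ k) ^ m * R₀.eval (1 - z ^ k) * R₂.eval (1 - z ^ k) ^ r := by
        rw [← pow_mul, hmn]; ring
    _ = (z ^ α * R₁.eval (1 - z ^ k)) ^ k - 1 := by
        rw [h]; linear_combination -heval

theorem eta_tilde_preserves_surface_general (k r : ℕ)
    (α : ℕ) (hkr : α = 0 → k ∣ r)
    (R₀ R₁ R₂ : ℂ[X])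
    (hrel : X * (1 - X) ^ ((1 - α) * r / k) * R₀ * R₂ ^ r = 1 - (1 - X) ^ α * R₁ ^ k)
    (lam : ℂ) (hlam : lam ≠ 0) (x y z : ℂ) (h : x ^ r * y = z ^ k - 1) :
    (lam * x * z ^ (1 - α) * R₂.eval (1 - z ^ k)) ^ r *
      (lam ^ (-(r : ℤ)) * y * R₀.eval (1 - z ^ k)) =
    (z ^ α * R₁.eval (1 - z ^ k)) ^ k - 1 := by
  have hdvd : k ∣ (1 - α) * r := by
    rcases Nat.eq_zero_or_pos α with rfl | hpos
    · simpa using hkr rfl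
    · simp [Nat.sub_eq_zero_of_le hpos]
  calc (lam * x * z ^ (1 - α) * R₂.eval (1 - z ^ k)) ^ r *
        (lam ^ (-(r : ℤ)) * y * R₀.eval (1 - z ^ k))
      = (x * z ^ (1 - α) * R₂.eval (1 - z ^ k)) ^ r * (y * R₀.eval (1 - z ^ k)) := by
        simpa only [mul_assoc] using pow_mul_zpow_neg_mul_eq hlam _ _ r
    _ = (z ^ α * R₁.eval (1 - z ^ k)) ^ k - 1 :=
        surface_map_of_polynomial_identity hrel (Nat.mul_div_cancel' hdvd) h

theorem eta_tilde_preserves_surface (k r : ℕ) (hk : 2 ≤ k) (hr : 2 ≤ r)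
    (α : ℕ) (hα : α ≤ 1) (hkr : α = 0 → k ∣ r)
    (R₀ R₁ R₂ : ℂ[X])
    (hrel : X * (1 - X) ^ ((1 - α) * r / k) * R₀ * R₂ ^ r = 1 - (1 - X) ^ α * R₁ ^ k)
    (lam : ℂ) (hlam : lam ≠ 0) (x y z : ℂ) (h : x ^ r * y = z ^ k - 1) :
    (lam * x * z ^ (1 - α) * R₂.eval (1 - z ^ k)) ^ r *
      (lam ^ (-(r : ℤ)) * y * R₀.eval (1 - z ^ k)) =
    (z ^ α * R₁.eval (1 - z ^ k)) ^ k - 1 :=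
  eta_tilde_preserves_surface_general k r α hkr R₀ R₁ R₂ hrel lam hlam x y z h
end

section
/- Let n ≥ 1, let c ∈ ℂ*, let m⁻, m⁺ ≥ 0 be integers, and set Q(x) = c·(x-1)^{m⁻}·(x+1)^{m⁺}. If A ∈ ℂ[x] satisfies A(x)·Q(x) = Q(T_n(x)), then A(x) = ((T_n(x)-1)/(x-1))^{m⁻}·((T_n(x)+1)/(x+1))^{m⁺} and A(1) = n^{2·m⁻}. -/
open Polynomial Polynomial.Chebyshev

/-!
Composing `Q = c (X - 1)^m⁻ (X + 1)^m⁺` with `T n` and cancelling `c` gives the polynomial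
identity. For the value at `1`, write `T n - 1 = (X - 1) B`; differentiating at `1` shows
`B(1) = (T n)'(1) = n²`. Cancelling `(X - 1)^m⁻` and evaluating at `1`, where `T n + 1` and
`X + 1` both take the value `2`, leaves `A(1) = B(1)^m⁻`.
-/

lemma eval_eq_derivative_eval_of_eq_X_sub_C_mul {R : Type*} [CommRing R] {p q : R[X]} {a : R}
    (h : p = (X - C a) * q) : q.eval a = (derivative p).eval a := by
  simp [h, derivative_mul]

lemma mul_eq_comp_of_mul_C_mul_eq_comp {R : Type*} [CommRing R] [IsDomain R] {A P f : R[X]}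
    {c : R} (hc : c ≠ 0) (h : A * (C c * P) = (C c * P).comp f) : A * P = P.comp f := by
  rw [mul_comp, C_comp, mul_left_comm] at h
  exact mul_left_cancel₀ (C_ne_zero.mpr hc) h

lemma exists_T_sub_one_eq_X_sub_one_mul {R : Type*} [CommRing R] (n : ℤ) :
    ∃ B : R[X], T R n - 1 = (X - 1) * B ∧ B.eval 1 = (n : R) ^ 2 := by
  have hroot : IsRoot (T R n - 1) 1 := by simp [IsRoot, T_eval_one]
  refine ⟨(T R n - 1) /ₘ (X - C 1), ?_, ?_⟩
  · simpa using (mul_divByMonic_eq_iff_isRoot.mpr hroot).symm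
  · rw [eval_eq_derivative_eval_of_eq_X_sub_C_mul (mul_divByMonic_eq_iff_isRoot.mpr hroot).symm,
      derivative_sub, derivative_one, sub_zero, derivative_T_eval_one]

theorem A_from_Cplus_equivariance_general (n : ℕ) (c : ℂ) (hc : c ≠ 0)
    (mm mp : ℕ) (A : ℂ[X])
    (hQ : A * (C c * (X - 1) ^ mm * (X + 1) ^ mp) =
      (C c * (X - 1) ^ mm * (X + 1) ^ mp).comp (T ℂ n)) :
    A * (X - 1) ^ mm * (X + 1) ^ mp = (T ℂ n - 1) ^ mm * (T ℂ n + 1) ^ mp ∧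
    A.eval 1 = (n : ℂ) ^ (2 * mm) := by
  simp only [mul_assoc] at hQ
  have hA : A * (X - 1) ^ mm * (X + 1) ^ mp = (T ℂ n - 1) ^ mm * (T ℂ n + 1) ^ mp := by
    simpa [mul_assoc, mul_comp] using mul_eq_comp_of_mul_C_mul_eq_comp hc hQ
  refine ⟨hA, ?_⟩
  obtain ⟨B, hB, hB1⟩ := exists_T_sub_one_eq_X_sub_one_mul (R := ℂ) n
  have hXne : ((X : ℂ[X]) - 1) ^ mm ≠ 0 := pow_ne_zero _ (X_sub_C_ne_zero 1)
  have hcancel : A * (X + 1) ^ mp = B ^ mm * (T ℂ n + 1) ^ mp := by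
    apply mul_left_cancel₀ hXne
    rw [hB, mul_pow] at hA
    linear_combination hA
  have heval := congrArg (eval 1) hcancel
  simp only [eval_mul, eval_pow, eval_add, eval_X, eval_one, T_eval_one, hB1] at heval
  push_cast at heval
  rw [mul_right_cancel₀ (pow_ne_zero _ (by norm_num)) heval, ← pow_mul]

theorem A_from_Cplus_equivariance (n : ℕ) (hn : 1 ≤ n) (c : ℂ) (hc : c ≠ 0)
    (mm mp : ℕ) (A : ℂ[X])
    (hQ : A * (C c * (X - 1) ^ mm * (X + 1) ^ mp) =
      (C c * (X - 1) ^ mm * (X + 1) ^ mp).comp (T ℂ n)) :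
    A * (X - 1) ^ mm * (X + 1) ^ mp = (T ℂ n - 1) ^ mm * (T ℂ n + 1) ^ mp ∧
    A.eval 1 = (n : ℂ) ^ (2 * mm) :=
  A_from_Cplus_equivariance_general n c hc mm mp A hQ
end

section
/- Let P ∈ ℂ[x] be a nonconstant polynomial such that: every critical point of P is non-degenerate (P''(x₀) ≠ 0 whenever P'(x₀) = 0), every critical value of P lies in {-1, 1}, P'(1) ≠ 0 and P'(-1) ≠ 0, P(1) = 1, and P(-1)² = 1. Then P is equal to a Chebyshev polynomial of the first kind, i.e., P = T_n where n = deg P. -/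
open Polynomial Polynomial.Chebyshev

private lemma Tc_eval_one (n : ℕ) : (T ℂ (n:ℤ)).eval 1 = 1 := by
  induction n using Nat.twoStepInduction with
  | zero => simp
  | one => simp
  | more n ih1 ih2 =>
    have h := T_add_two ℂ (n:ℤ)
    push_cast at ih2 ⊢
    rw [h, eval_sub, eval_mul, eval_mul, eval_X, ih1, ih2]
    norm_num

private lemma Tc_natDegree_le (n : ℕ) : (T ℂ (n:ℤ)).natDegree ≤ n := by
  induction n using Nat.twoStepInduction with
  | zero => simp
  | one => simp
  | more n ih1 ih2 =>
    have h := T_add_two ℂ (n:ℤ)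
    push_cast
    rw [h]
    refine le_trans (natDegree_sub_le _ _) ?_
    simp only [max_le_iff]
    constructor
    · calc (2 * X * T ℂ ((n:ℤ)+1)).natDegree ≤ (2*X : ℂ[X]).natDegree + (T ℂ ((n:ℤ)+1)).natDegree :=
        natDegree_mul_le
      _ ≤ 1 + (n+1) := by
          gcongr
          · exact (natDegree_C_mul_le 2 X).trans (by simp)
          · exact_mod_cast ih2
      _ ≤ n + 2 := by omega
    · exact le_trans (by exact_mod_cast ih1) (by omega)

private lemma Tc_coeff (n : ℕ) (hn : 1 ≤ n) : (T ℂ (n:ℤ)).coeff n = 2^(n-1) := by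
  suffices h : ∀ n : ℕ, (T ℂ (n:ℤ)).coeff n = if n = 0 then 1 else 2^(n-1) by
    rw [h n, if_neg (by omega)]
  clear hn n
  intro n
  induction n using Nat.twoStepInduction with
  | zero => simp
  | one => simp
  | more n ih1 ih2 =>
    have h := T_add_two ℂ (n:ℤ)
    push_cast
    rw [h]
    have hd : (T ℂ (n:ℤ)).coeff (n+2) = 0 :=
      coeff_eq_zero_of_natDegree_lt (lt_of_le_of_lt (Tc_natDegree_le n) (by omega))
    have h2 : (2 * X * T ℂ ((n:ℤ)+1)).coeff (n+2) = 2 * (T ℂ ((n:ℤ)+1)).coeff (n+1) := by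
      rw [mul_assoc, (map_ofNat (C : ℂ →+* ℂ[X]) 2).symm, coeff_C_mul, coeff_X_mul]
    push_cast at ih2
    rw [coeff_sub, h2, hd, ih2]
    simp
    ring

private lemma Tc_ode (n : ℕ) :
    X * derivative (T ℂ (n:ℤ)) + (X^2 - 1) * derivative (derivative (T ℂ (n:ℤ)))
      = (n:ℂ[X])^2 * T ℂ (n:ℤ) := by
  induction n using Nat.twoStepInduction with
  | zero => simp
  | one => simp
  | more n ih1 ih2 =>
    have h := T_add_two ℂ (n:ℤ)
    have H := one_sub_X_sq_mul_derivative_T_eq_poly_in_T (R := ℂ) (n:ℤ)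
    have hd : derivative (T ℂ ((n:ℤ)+2))
        = 2 * T ℂ ((n:ℤ)+1) + 2 * X * derivative (T ℂ ((n:ℤ)+1)) - derivative (T ℂ (n:ℤ)) := by
      rw [h]; simp only [derivative_sub, derivative_mul, derivative_X, derivative_ofNat]; ring
    have hd2 : derivative (derivative (T ℂ ((n:ℤ)+2)))
        = 4 * derivative (T ℂ ((n:ℤ)+1)) + 2 * X * derivative (derivative (T ℂ ((n:ℤ)+1)))
          - derivative (derivative (T ℂ (n:ℤ))) := by
      rw [hd]; simp only [derivative_sub, derivative_add, derivative_mul, derivative_X, derivative_ofNat]; ring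
    push_cast at ih2 ⊢
    rw [hd2, hd, h]
    linear_combination (norm := (push_cast; ring_nf)) (2*(X:ℂ[X])) * ih2 - ih1 - 4 * H

private lemma ode_coeff {n : ℕ} {y : ℂ[X]}
    (h : X * derivative y + (X^2 - 1) * derivative (derivative y) = (n:ℂ[X])^2 * y) (k : ℕ) :
    ((n:ℂ)^2 - (k:ℂ)^2) * y.coeff k = -(((k:ℂ)+1) * ((k:ℂ)+2)) * y.coeff (k+2) := by
  have hC : ((n : ℂ[X]))^2 = C ((n:ℂ)^2) := by rw [map_pow, C_eq_natCast]
  have h' : X * derivative y + X^2 * derivative (derivative y)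
      = C ((n:ℂ)^2) * y + derivative (derivative y) := by
    rw [← hC]; linear_combination h
  have hc := congrArg (fun p => coeff p k) h'
  simp only [coeff_add, coeff_C_mul] at hc
  have hdd : ∀ m : ℕ, (derivative (derivative y)).coeff m
      = ((m:ℂ)+1) * ((m:ℂ)+2) * y.coeff (m+2) := by
    intro m; rw [coeff_derivative, coeff_derivative]; push_cast; ring
  match k with
  | 0 =>
    simp only [mul_coeff_zero, coeff_X_zero, coeff_X_pow, zero_mul, hdd 0] at hc
    push_cast
    push_cast at hc
    linear_combination -hc
  | 1 =>
    rw [show (1:ℕ) = 0 + 1 from rfl, coeff_X_mul] at hc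
    rw [coeff_X_pow_mul' y.derivative.derivative 2 (0+1)] at hc
    rw [if_neg (by norm_num), coeff_derivative, hdd 1] at hc
    push_cast
    push_cast at hc
    linear_combination -hc
  | (k+2) =>
    rw [show k+2 = (k+1) + 1 from rfl, coeff_X_mul, coeff_derivative] at hc
    rw [show (k+1)+1 = k + 2 from rfl, coeff_X_pow_mul y.derivative.derivative 2 k] at hc
    rw [hdd k, hdd (k+2)] at hc
    push_cast
    push_cast at hc
    linear_combination -hc

private lemma ode_unique {n : ℕ} {y : ℂ[X]}
    (h : X * derivative y + (X^2 - 1) * derivative (derivative y) = (n:ℂ[X])^2 * y)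
    (hdeg : y.natDegree ≤ n) (htop : y.coeff n = 0) : y = 0 := by
  have key : ∀ m k : ℕ, n ≤ k + m → y.coeff k = 0 := by
    intro m
    induction m with
    | zero =>
      intro k hk
      rcases eq_or_lt_of_le hk with he | hl
      · have : k = n := by omega
        rw [this]; exact htop
      · exact coeff_eq_zero_of_natDegree_lt (lt_of_le_of_lt hdeg (by omega))
    | succ m ih =>
      intro k hk
      by_cases hk' : n ≤ k + m
      · exact ih k hk'
      · have hkn : k < n := by omega
        have h2 : y.coeff (k+2) = 0 := ih (k+2) (by omega)
        have hrec := ode_coeff h k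
        rw [h2, mul_zero] at hrec
        have hne : ((n:ℂ)^2 - (k:ℂ)^2) ≠ 0 := by
          have h1 : (n:ℂ) + (k:ℂ) ≠ 0 := by
            have : n + k ≠ 0 := by omega
            exact_mod_cast this
          have h2' : (n:ℂ) - (k:ℂ) ≠ 0 := by
            rw [sub_ne_zero]
            exact_mod_cast (by omega : n ≠ k)
          have : (n:ℂ)^2 - (k:ℂ)^2 = ((n:ℂ)+k) * ((n:ℂ)-k) := by ring
          rw [this]
          exact mul_ne_zero h1 h2'
        exact (mul_eq_zero.mp hrec).resolve_left hne
  ext k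
  simpa using key n k (by omega)


theorem chebyshev_characterization (P : ℂ[X]) (hP : 1 ≤ P.natDegree)
    (hnd : ∀ x₀ : ℂ, (derivative P).eval x₀ = 0 → (derivative (derivative P)).eval x₀ ≠ 0)
    (hcv : ∀ x₀ : ℂ, (derivative P).eval x₀ = 0 → P.eval x₀ = 1 ∨ P.eval x₀ = -1)
    (hc1 : (derivative P).eval 1 ≠ 0) (hcm1 : (derivative P).eval (-1) ≠ 0)
    (h1 : P.eval 1 = 1) (hm1 : (P.eval (-1)) ^ 2 = 1) :
    P = T ℂ (P.natDegree : ℤ) := by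
  classical
  set n := P.natDegree with hn
  set A := derivative P with hA
  set B := P^2 - 1 with hB
  have hP0 : P ≠ 0 := fun h => by rw [hn, h, natDegree_zero] at hP; omega
  have hA0 : A ≠ 0 := fun h => hc1 (by rw [h]; simp)
  have hdegA : A.natDegree = n - 1 := by
    apply natDegree_eq_of_degree_eq_some
    exact degree_derivative_eq P (by omega)
  have hdB : B.natDegree = 2 * n := by
    rw [hB, show (1:ℂ[X]) = C 1 from (map_one Polynomial.C).symm, natDegree_sub_C, natDegree_pow]
  have hB0 : B ≠ 0 := fun h => by rw [h, natDegree_zero] at hdB; omega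
  have hdB' : derivative B = C 2 * P * A := by
    rw [hB, derivative_sub, derivative_one, derivative_pow]
    simp [hA]
  -- simple roots of A
  have hmA : ∀ a : ℂ, A.eval a = 0 → rootMultiplicity a A = 1 := by
    intro a ha
    refine le_antisymm ?_ ((rootMultiplicity_pos hA0).2 ha)
    by_contra hcon
    have h2 : 1 < rootMultiplicity a A := by omega
    obtain ⟨-, h2'⟩ := (one_lt_rootMultiplicity_iff_isRoot hA0).mp h2
    exact hnd a ha h2'
  have hmB : ∀ a : ℂ, A.eval a = 0 → 2 ≤ rootMultiplicity a B := by
    intro a ha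
    refine (one_lt_rootMultiplicity_iff_isRoot hB0).mpr ⟨?_, ?_⟩
    · show B.eval a = 0
      rcases hcv a ha with h | h <;> simp [hB, h]
    · show (derivative B).eval a = 0
      rw [hdB']
      simp [ha]
  have hdvd : A ^ 2 ∣ B := by
    apply Splits.dvd_of_roots_le_roots (IsAlgClosed.splits _) (pow_ne_zero 2 hA0)
    rw [roots_pow]
    rw [Multiset.le_iff_count]
    intro a
    rw [Multiset.count_nsmul, count_roots, count_roots]
    by_cases ha : A.eval a = 0
    · rw [hmA a ha]
      simpa using hmB a ha
    · rw [rootMultiplicity_eq_zero ha]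
      simp
  obtain ⟨q, hq⟩ := hdvd
  have hA20 : A ^ 2 ≠ 0 := pow_ne_zero 2 hA0
  have hq0 : q ≠ 0 := fun h => hB0 (by rw [hq, h, mul_zero])
  have hdegq : q.natDegree = 2 := by
    have := natDegree_mul hA20 hq0
    rw [← hq, hdB, natDegree_pow, hdegA] at this
    omega
  -- leading coefficients
  have hlcA : A.leadingCoeff = (n : ℂ) * P.leadingCoeff := by
    rw [leadingCoeff, hdegA, hA, coeff_derivative]
    rw [show n - 1 + 1 = n by omega]
    rw [leadingCoeff, ← hn]
    rw [Nat.cast_sub (by omega : 1 ≤ n)]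
    push_cast
    ring
  have hlcB : B.leadingCoeff = P.leadingCoeff ^ 2 := by
    rw [leadingCoeff, hdB, hB, coeff_sub]
    have h2n : 2 * n ≠ 0 := by omega
    rw [coeff_one, if_neg (by omega : ¬ (2 * n = 0))]
    have : (P ^ 2).natDegree = 2 * n := by rw [natDegree_pow]
    rw [← this, coeff_natDegree, leadingCoeff_pow]
    ring
  have hn0 : (n : ℂ) ≠ 0 := Nat.cast_ne_zero.mpr (by omega)
  have hlcP : P.leadingCoeff ≠ 0 := leadingCoeff_ne_zero.mpr hP0
  have hlcq : q.leadingCoeff * (n : ℂ)^2 = 1 := by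
    have hmul := leadingCoeff_mul (A ^ 2) q
    rw [← hq, hlcB, leadingCoeff_pow, hlcA] at hmul
    exact mul_left_cancel₀ (pow_ne_zero 2 hlcP) (by linear_combination -hmul)
  -- the quadratic factor equals (X^2-1)/n^2
  set g : ℂ[X] := (X^2 - 1) - C ((n:ℂ)^2) * q with hg
  have hAq1 : (A.eval 1)^2 * q.eval 1 = 0 := by
    have : B.eval 1 = 0 := by rw [hB]; simp [h1]
    rw [hq] at this
    simpa using this
  have hq1 : q.eval 1 = 0 := by
    rcases mul_eq_zero.mp hAq1 with h | h
    · exact absurd (sq_eq_zero_iff.mp h) hc1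
    · exact h
  have hqm1 : q.eval (-1) = 0 := by
    have hBm : B.eval (-1) = 0 := by rw [hB]; simp [hm1]
    rw [hq] at hBm
    have hz : (A.eval (-1))^2 * q.eval (-1) = 0 := by simpa using hBm
    rcases mul_eq_zero.mp hz with h | h
    · exact absurd (sq_eq_zero_iff.mp h) hcm1
    · exact h
  have hdegg : g.natDegree ≤ 2 := by
    refine le_trans (natDegree_sub_le _ _) ?_
    rw [max_le_iff]
    constructor
    · exact le_trans (natDegree_sub_le _ _) (by simp)
    · exact le_trans (natDegree_C_mul_le _ _) (by omega)
  have hg2 : g.coeff 2 = 0 := by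
    rw [hg, coeff_sub, coeff_sub, coeff_X_pow, coeff_C_mul]
    have hq2 : q.coeff 2 = q.leadingCoeff := by rw [leadingCoeff, hdegq]
    rw [hq2, coeff_one, if_neg (by omega : ¬ (2:ℕ) = 0), if_pos rfl]
    linear_combination -hlcq
  have hdegg1 : g.natDegree ≤ 1 := by
    rw [natDegree_le_iff_coeff_eq_zero]
    intro m hm
    rcases eq_or_lt_of_le (show 2 ≤ m by omega) with he | hl
    · rw [← he]; exact hg2
    · exact coeff_eq_zero_of_natDegree_lt (lt_of_le_of_lt hdegg hl)
  have hgeval1 : g.eval 1 = 0 := by rw [hg]; simp [hq1]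
  have hgevalm1 : g.eval (-1) = 0 := by rw [hg]; simp [hqm1]
  have hg0 : (X^2 - 1 : ℂ[X]) - C ((n:ℂ)^2) * q = 0 := by
    rw [← hg]
    have hrep := eq_X_add_C_of_natDegree_le_one hdegg1
    rw [hrep] at hgeval1 hgevalm1 ⊢
    simp only [eval_add, eval_mul, eval_C, eval_X, mul_one, mul_neg_one] at hgeval1 hgevalm1
    have e1 : g.coeff 1 = 0 := by linear_combination (hgeval1 - hgevalm1) / 2
    have e0 : g.coeff 0 = 0 := by linear_combination (hgeval1 + hgevalm1) / 2
    rw [e1, e0]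
    simp
  have hXq : (X^2 - 1 : ℂ[X]) = C ((n:ℂ)^2) * q := sub_eq_zero.mp hg0
  have hpell : C ((n:ℂ)^2) * B = (X^2 - 1) * A^2 := by rw [hXq, hq]; ring
  have e1 : derivative ((X^2 - 1 : ℂ[X]) * A^2) = C 2 * X * A^2
      + (X^2-1) * (C 2 * A * derivative A) := by
    rw [derivative_mul, derivative_pow, derivative_sub, derivative_one, derivative_X_pow]
    simp
  have hder : C ((n:ℂ)^2) * (C 2 * P * A) = C 2 * X * A^2
      + (X^2-1) * (C 2 * A * derivative A) := by
    have hcd := congrArg derivative hpell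
    rwa [derivative_C_mul, hdB', e1] at hcd
  have hCA : (C (2:ℂ) * A) ≠ 0 := mul_ne_zero (by simp) hA0
  have hC : ((n : ℂ[X]))^2 = C ((n:ℂ)^2) := by rw [map_pow, C_eq_natCast]
  have hodeP : X * derivative P + (X^2 - 1) * derivative (derivative P) = (n:ℂ[X])^2 * P := by
    rw [hC]
    have hkey : (C (2:ℂ) * A) * (C ((n:ℂ)^2) * P)
        = (C (2:ℂ) * A) * (X * A + (X^2 - 1) * derivative A) := by
      linear_combination hder
    have := mul_left_cancel₀ hCA hkey
    rw [hA] at this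
    linear_combination -this
  set c : ℂ := P.leadingCoeff / 2^(n-1) with hc
  have hodeD : X * derivative (P - C c * T ℂ (n:ℤ))
      + (X^2 - 1) * derivative (derivative (P - C c * T ℂ (n:ℤ)))
      = (n:ℂ[X])^2 * (P - C c * T ℂ (n:ℤ)) := by
    simp only [derivative_sub, derivative_C_mul]
    linear_combination hodeP - (C c) * (Tc_ode n)
  have hdegD : (P - C c * T ℂ (n:ℤ)).natDegree ≤ n := by
    refine le_trans (natDegree_sub_le _ _) ?_
    rw [max_le_iff]
    exact ⟨le_of_eq hn.symm, le_trans (natDegree_C_mul_le _ _) (Tc_natDegree_le n)⟩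
  have hcoeffD : (P - C c * T ℂ (n:ℤ)).coeff n = 0 := by
    rw [coeff_sub, coeff_C_mul, Tc_coeff n hP]
    rw [show P.coeff n = P.leadingCoeff from rfl]
    rw [hc]
    field_simp
    simp
  have hD0 : P - C c * T ℂ (n:ℤ) = 0 := ode_unique hodeD hdegD hcoeffD
  have hPT : P = C c * T ℂ (n:ℤ) := by rwa [sub_eq_zero] at hD0
  have hc1' : c = 1 := by
    have he := h1
    rw [hPT, eval_mul, eval_C, Tc_eval_one n] at he
    simpa using he
  rw [hPT, hc1']
  simp
end
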